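/- arXiv:0802.1323 — 3 statements merged into one kernel-verified Lean document; each statement's English description precedes it below -/
import Mathlib

section
/- Bounded Cancellation Lemma (algebraic form): Let F be a finitely generated free group with basis A and let φ be an automorphism of F. Then there exists a constant B, depending only on φ, such that for all u, v ∈ F with |uv| = |u| + |v| (i.e. there is no cancellation in the product uv), one has |φ(u)| + |φ(v)| − |φ(uv)| ≤ 2B; in other words, when the reduced words for φ(u) and φ(v) are concatenated and freely reduced, at most B letters are cancelled from each factor. -/
/-!
The Cayley graph of `F` is a tree, and `φ`, `φ⁻¹` are Lipschitz for the word metric, with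
constants `K` and `L`. Pulling the geodesic from `1` to `φ (u * v)` back along `φ⁻¹` gives a path
from `1` to `u * v` whose jumps have length at most `L`. The elements whose reduced word begins
with that of `u` form a subtree attached to the rest of the tree at `u`, and `u * v` lies in it
while `1` does not (unless `u = 1`); so the path passes within `L` of `u`, at the preimage of some
point `w` of the geodesic. Hence `|φ u| ≤ |w| + K L` and `|φ v| ≤ K L + |w⁻¹ φ (u * v)|`, and the
two terms `|w|`, `|w⁻¹ φ (u * v)|` add up to `|φ (u * v)|`: one may take `B = K L`.
-/

theorem List.exists_maximal_common_prefix {β : Type*} :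
    ∀ A U : List β, ∃ c A' U', A = c ++ A' ∧ U = c ++ U' ∧
      ∀ x ∈ A'.head?, ∀ y ∈ U'.head?, x ≠ y
  | [], U => ⟨[], [], U, rfl, rfl, by simp⟩
  | x :: A, [] => ⟨[], x :: A, [], rfl, rfl, by simp⟩
  | x :: A, y :: U => by
    by_cases hxy : x = y
    · obtain ⟨c, A', U', rfl, rfl, hne⟩ := exists_maximal_common_prefix A U
      exact ⟨x :: c, A', U', rfl, by rw [hxy]; rfl, hne⟩
    · exact ⟨[], x :: A, y :: U, rfl, rfl, by simpa using hxy⟩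

namespace FreeGroup

variable {α : Type*}

theorem isReduced_invRev_append {A U : List (α × Bool)} (hA : IsReduced (invRev A))
    (hU : IsReduced U) (hne : ∀ x ∈ A.head?, ∀ y ∈ U.head?, x ≠ y) :
    IsReduced (invRev A ++ U) := by
  refine hA.append hU fun x hx y hy hxy => ?_
  have hx' : (x.1, !x.2) ∈ A.head? := by
    simp only [invRev, List.getLast?_reverse, List.head?_map] at hx
    obtain ⟨a, ha, rfl⟩ := Option.mem_map.mp hx
    simpa using ha
  by_contra h
  exact hne _ hx' y hy (Prod.ext hxy (Bool.not_eq.mpr h))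

variable [DecidableEq α]

theorem IsReduced.norm_mk {L : List (α × Bool)} (h : IsReduced L) : (mk L).norm = L.length := by
  rw [norm, toWord_mk, h.reduce_eq]

theorem toWord_mul_of_norm_mul_eq {u v : FreeGroup α} (h : (u * v).norm = u.norm + v.norm) :
    (u * v).toWord = u.toWord ++ v.toWord :=
  (toWord_mul_sublist u v).eq_of_length (by simpa [norm] using h)

theorem norm_inv_mul_le_of_isPrefix {u a b : FreeGroup α} (hb : u.toWord <+: b.toWord)
    (ha : ¬ u.toWord <+: a.toWord) : (u⁻¹ * b).norm ≤ (a⁻¹ * b).norm := by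
  obtain ⟨r, hr⟩ := hb
  obtain ⟨c, A', U', hA, hU, hne⟩ := List.exists_maximal_common_prefix a.toWord u.toWord
  have hU' : U' ≠ [] := by
    rintro rfl
    exact ha ⟨A', by rw [hA, hU, List.append_nil]⟩
  have hub : u⁻¹ * b = mk r := by
    rw [← mk_toWord (x := b), ← hr, ← mul_mk, mk_toWord, inv_mul_cancel_left]
  have hab : a⁻¹ * b = mk (invRev A' ++ U' ++ r) := by
    rw [← mk_toWord (x := a), ← mk_toWord (x := b), ← hr, hA, hU]
    simp only [← mul_mk, mul_assoc, ← inv_mk]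
    group
  have hred : IsReduced (invRev A' ++ U' ++ r) := by
    have hA' : IsReduced (invRev A') :=
      (isReduced_toWord (x := a⁻¹)).infix ⟨[], invRev c, by simp [toWord_inv, hA, invRev_append]⟩
    have hU'r : IsReduced (U' ++ r) :=
      (isReduced_toWord (x := b)).infix ⟨c, [], by simp [← hr, hU]⟩
    exact (isReduced_invRev_append hA' (hU'r.infix (List.prefix_append _ _).isInfix) hne)
      |>.append_overlap hU'r hU'
  calc (u⁻¹ * b).norm ≤ r.length := hub ▸ norm_mk_le
    _ ≤ (invRev A' ++ U' ++ r).length := by simp only [List.length_append]; omega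
    _ = (a⁻¹ * b).norm := by rw [hab, hred.norm_mk]

theorem exists_norm_inv_mul_le_of_isPrefix {u : FreeGroup α} {L : ℕ} {g : ℕ → FreeGroup α}
    (h0 : g 0 = 1) (hstep : ∀ i, ((g i)⁻¹ * g (i + 1)).norm ≤ L) :
    ∀ n, u.toWord <+: (g n).toWord → ∃ t, (u⁻¹ * g t).norm ≤ L
  | 0, h => by
    rw [h0, toWord_one, List.prefix_nil, toWord_eq_nil_iff] at h
    exact ⟨0, by simp [h, h0]⟩
  | n + 1, h => by
    by_cases hn : u.toWord <+: (g n).toWord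
    · exact exists_norm_inv_mul_le_of_isPrefix h0 hstep n hn
    · exact ⟨n + 1, (norm_inv_mul_le_of_isPrefix h hn).trans (hstep n)⟩

theorem norm_inv_mk_take_mul_mk_take_succ_le (W : List (α × Bool)) (i : ℕ) :
    ((mk (W.take i))⁻¹ * mk (W.take (i + 1))).norm ≤ 1 := by
  rw [List.take_add_one, ← mul_mk, inv_mul_cancel_left]
  exact norm_mk_le.trans (by cases W[i]? <;> simp)

theorem norm_mk_take_add_norm_inv_mul_le (x : FreeGroup α) (t : ℕ) :
    (mk (x.toWord.take t)).norm + ((mk (x.toWord.take t))⁻¹ * x).norm ≤ x.norm := by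
  have hx : (mk (x.toWord.take t))⁻¹ * x = mk (x.toWord.drop t) := by
    rw [inv_mul_eq_iff_eq_mul, mul_mk, List.take_append_drop, mk_toWord]
  calc (mk (x.toWord.take t)).norm + ((mk (x.toWord.take t))⁻¹ * x).norm
      ≤ (x.toWord.take t).length + (x.toWord.drop t).length :=
        add_le_add norm_mk_le (hx ▸ norm_mk_le)
    _ = x.norm := by rw [← List.length_append, List.take_append_drop, norm]

theorem exists_norm_map_le_mul_norm [Fintype α] {β : Type*} [DecidableEq β]
    (ψ : FreeGroup α →* FreeGroup β) : ∃ C, ∀ z, (ψ z).norm ≤ C * z.norm := by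
  let f (x : α × Bool) : ℕ := (ψ (mk [x])).norm
  have hmk (L : List (α × Bool)) : (ψ (mk L)).norm ≤ Finset.univ.sup f * L.length := by
    induction L with
    | nil => simp [← one_eq_mk]
    | cons x L ih =>
      calc (ψ (mk (x :: L))).norm = (ψ (mk [x]) * ψ (mk L)).norm := by
            rw [← _root_.map_mul, mul_mk, List.singleton_append]
        _ ≤ Finset.univ.sup f + Finset.univ.sup f * L.length :=
          (norm_mul_le _ _).trans (add_le_add (Finset.le_sup (f := f) (Finset.mem_univ x)) ih)
        _ = Finset.univ.sup f * (x :: L).length := by rw [List.length_cons]; ring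
  refine ⟨Finset.univ.sup f, fun z => ?_⟩
  calc (ψ z).norm = (ψ (mk z.toWord)).norm := by rw [mk_toWord]
    _ ≤ _ := hmk z.toWord

end FreeGroup

open FreeGroup in
theorem bounded_cancellation (m : ℕ) (φ : MulAut (FreeGroup (Fin m))) :
    ∃ B : ℕ, ∀ u v : FreeGroup (Fin m),
      FreeGroup.norm (u * v) = FreeGroup.norm u + FreeGroup.norm v →
      (FreeGroup.norm (φ u) : ℤ) + (FreeGroup.norm (φ v) : ℤ)
        - (FreeGroup.norm (φ (u * v)) : ℤ) ≤ 2 * B := by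
  obtain ⟨K, hK⟩ := exists_norm_map_le_mul_norm φ.toMonoidHom
  obtain ⟨L, hL⟩ := exists_norm_map_le_mul_norm φ.symm.toMonoidHom
  refine ⟨K * L, fun u v huv => ?_⟩
  let w (t : ℕ) : FreeGroup (Fin m) := mk ((φ (u * v)).toWord.take t)
  have hstep (i : ℕ) : ((φ.symm (w i))⁻¹ * φ.symm (w (i + 1))).norm ≤ L := by
    calc _ = (φ.symm ((w i)⁻¹ * w (i + 1))).norm := by rw [_root_.map_mul, _root_.map_inv]
      _ ≤ L * 1 := (hL _).trans (Nat.mul_le_mul_left L (norm_inv_mk_take_mul_mk_take_succ_le _ i))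
      _ = L := mul_one L
  have hend : u.toWord <+: (φ.symm (w (φ (u * v)).toWord.length)).toWord := by
    simp only [w, List.take_length, mk_toWord, MulEquiv.symm_apply_apply,
      toWord_mul_of_norm_mul_eq huv]
    exact List.prefix_append _ _
  obtain ⟨t, ht⟩ := exists_norm_inv_mul_le_of_isPrefix (by simp [w, ← one_eq_mk]) hstep _ hend
  set d := φ (u⁻¹ * φ.symm (w t))
  have hd : d.norm ≤ K * L := (hK _).trans (Nat.mul_le_mul_left K ht)
  have hu : φ u = w t * d⁻¹ := by simp [d]
  have hv : φ v = d * ((w t)⁻¹ * φ (u * v)) := by simp [d]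
  have hw : (w t).norm + ((w t)⁻¹ * φ (u * v)).norm ≤ (φ (u * v)).norm :=
    norm_mk_take_add_norm_inv_mul_le _ t
  have hu' : (φ u).norm ≤ (w t).norm + d.norm := by
    rw [hu, ← norm_inv_eq (x := d)]
    exact norm_mul_le _ _
  have hv' : (φ v).norm ≤ d.norm + ((w t)⁻¹ * φ (u * v)).norm := hv ▸ norm_mul_le _ _
  push_cast
  omega
end

section
/- Proposition (conditioning the automorphism): Let φ be a positive automorphism of the free group F with basis a_1, …, a_m. Then there exists a positive integer k such that φ_0 := φ^k satisfies: (1) every basis letter x appears in φ_0(x); (2) every basis letter x that is exponential for φ_0 appears at least 3 times in φ_0(x); (3) for every basis letter x, every y ∈ supp_{φ_0}(x) appears in φ_0(x); (4) for every basis letter x and every j ≥ 1, the leftmost and the rightmost letters of the positive word φ_0^j(x) are the same as those of φ_0(x); (5) for every basis letter x, every j ≥ 1 and every z ∈ supp_{φ_0}(x), the positive word φ_0^j(x) contains a letter from the stratum Σ_{φ_0}(z), and its leftmost (respectively rightmost) letter belonging to Σ_{φ_0}(z) is the same as the leftmost (respectively rightmost) letter of φ_0(x) belonging to Σ_{φ_0}(z).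 -/
/-- `φ` is a positive automorphism: each reduced word `φ(aᵢ)` contains no inverse
letters. -/
def IsPositiveAut (m : ℕ) (φ : MulAut (FreeGroup (Fin m))) : Prop :=
  ∀ i : Fin m, ∀ p ∈ (φ (FreeGroup.of i)).toWord, p.2 = true

/-- The basis letter `y` appears in the positive word `ψ^j(x)`. -/
def Appears (m : ℕ) (ψ : MulAut (FreeGroup (Fin m))) (j : ℕ) (y x : Fin m) : Prop :=
  (y, true) ∈ ((ψ ^ j) (FreeGroup.of x)).toWord

/-- The support of a basis letter `x`: all basis letters appearing in some `ψ^j(x)`,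
`j ≥ 0`. -/
def supp (m : ℕ) (ψ : MulAut (FreeGroup (Fin m))) (x : Fin m) : Set (Fin m) :=
  { y | ∃ j : ℕ, Appears m ψ j y x }

/-- The stratum of a basis letter `x`: those `y ∈ supp x` with `supp y = supp x`. -/
def stratum (m : ℕ) (ψ : MulAut (FreeGroup (Fin m))) (x : Fin m) : Set (Fin m) :=
  { y ∈ supp m ψ x | supp m ψ y = supp m ψ x }

/-- A basis letter `x` is exponential for `ψ` if its stratum contains another letter. -/
def IsExponential (m : ℕ) (ψ : MulAut (FreeGroup (Fin m))) (x : Fin m) : Prop :=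
  ∃ y ∈ stratum m ψ x, y ≠ x

/-- `a` is the first entry of the list `l` satisfying `P`. -/
def IsFirstSuchThat {α : Type*} (P : α → Prop) (l : List α) (a : α) : Prop :=
  ∃ k : ℕ, ∃ h : k < l.length, l.get ⟨k, h⟩ = a ∧ P a ∧
    ∀ k' : ℕ, ∀ h' : k' < l.length, k' < k → ¬ P (l.get ⟨k', h'⟩)

/-- `a` is the last entry of the list `l` satisfying `P`. -/
def IsLastSuchThat {α : Type*} (P : α → Prop) (l : List α) (a : α) : Prop :=
  IsFirstSuchThat P l.reverse a

/-- `ψ` is conditioned (conclusion (1)–(5) of the conditioning proposition). -/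
def Conditioned (m : ℕ) (ψ : MulAut (FreeGroup (Fin m))) : Prop :=
  -- (1) every basis letter appears in its own image
  (∀ x : Fin m, Appears m ψ 1 x x) ∧
  -- (2) every exponential letter appears at least 3 times in its own image
  (∀ x : Fin m, IsExponential m ψ x → 3 ≤ (ψ (FreeGroup.of x)).toWord.count (x, true)) ∧
  -- (3) every letter of the support of `x` appears in `ψ(x)`
  (∀ x : Fin m, ∀ y ∈ supp m ψ x, Appears m ψ 1 y x) ∧
  -- (4) the leftmost and rightmost letters of `ψ^j(x)` agree with those of `ψ(x)`
  (∀ x : Fin m, ∀ j : ℕ, 1 ≤ j →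
    ((ψ ^ j) (FreeGroup.of x)).toWord.head? = (ψ (FreeGroup.of x)).toWord.head? ∧
    ((ψ ^ j) (FreeGroup.of x)).toWord.getLast? = (ψ (FreeGroup.of x)).toWord.getLast?) ∧
  -- (5) for every stratum meeting the support, the extreme letters from that stratum
  -- in `ψ^j(x)` agree with those of `ψ(x)`
  (∀ x : Fin m, ∀ j : ℕ, 1 ≤ j → ∀ z ∈ supp m ψ x,
    (∃ p : Fin m × Bool,
      IsFirstSuchThat (fun q => q.1 ∈ stratum m ψ z)
        (((ψ ^ j) (FreeGroup.of x)).toWord) p ∧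
      IsFirstSuchThat (fun q => q.1 ∈ stratum m ψ z)
        ((ψ (FreeGroup.of x)).toWord) p) ∧
    (∃ p : Fin m × Bool,
      IsLastSuchThat (fun q => q.1 ∈ stratum m ψ z)
        (((ψ ^ j) (FreeGroup.of x)).toWord) p ∧
      IsLastSuchThat (fun q => q.1 ∈ stratum m ψ z)
        ((ψ (FreeGroup.of x)).toWord) p))

/-!
Positivity makes `φʲ(x)` the positive word obtained by iterating the substitution `σ` that sends
each letter `x` to the letters of `φ(x)`. The abelianization matrix of `φ` is invertible, so some
term `∏ₓ M (π x) x` of the Leibniz expansion of its determinant is nonzero: `π x` occurs in `σ x`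
for a permutation `π`, and every letter `x` occurs in `σᴷ(x)` for `K` the order of `π`. Then the
set of letters of `σᴷⁿ(x)` grows with `n`, and a further power `L` puts the whole support of `x`
into its image; this gives (1) and (3), and (2) because a letter `x` and a letter `y ≠ x` of
its stratum occur in each other's images, so the number of occurrences of `x` in `σⁿ(x)` is at
least `n`.

For (4) and (5), the first letter of `σʲ⁺¹(x)` in the stratum of `z` lies in the image of the first
letter of `σʲ(x)` whose support contains `z`, and these letters are the iterates of a self-map of
the alphabet. Iterates of a self-map of a set of `m` elements are periodic from `m` on, with
period dividing `m!`, so passing to the power `N = 3 (m + 1)!` makes the extreme letters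
stable; `k = K L N`.
-/

namespace List

variable {α β : Type*}

theorem find?_flatMap_eq_bind (f : α → List β) (p : β → Bool) (l : List α) :
    (l.flatMap f).find? p = (l.find? fun a => (f a).any p).bind fun a => (f a).find? p := by
  induction l with
  | nil => rfl
  | cons a l ih =>
    rw [flatMap_cons, find?_append, ih]
    cases h : (f a).find? p with
    | none =>
      have : (f a).any p = false := by simpa [find?_eq_none] using h
      simp [find?_cons_of_neg, this]
    | some b =>
      have : (f a).any p = true := any_eq_true.2 ⟨b, mem_of_find?_eq_some h, find?_some h⟩
      simp [find?_cons_of_pos, this, h]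

theorem count_add_count_le_count_flatMap [DecidableEq α] [DecidableEq β] {a b : α} (hab : a ≠ b)
    {c : β} {f : α → List β} (ha : c ∈ f a) (hb : c ∈ f b) (l : List α) :
    l.count a + l.count b ≤ (l.flatMap f).count c := by
  induction l with
  | nil => simp
  | cons w l ih =>
    rw [flatMap_cons, count_append, count_cons, count_cons]
    by_cases hwa : w = a
    · subst hwa
      have := count_pos_iff.2 ha
      simp [hab]
      omega
    · by_cases hwb : w = b
      · subst hwb
        have := count_pos_iff.2 hb
        simp [Ne.symm hab]
        omega
      · simp [hwa, hwb]
        omega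

theorem isFirstSuchThat_iff_find?_eq_some {P : α → Prop} [DecidablePred P] {l : List α} {a : α} :
    IsFirstSuchThat P l a ↔ l.find? (fun b => decide (P b)) = some a := by
  simp only [IsFirstSuchThat, find?_eq_some_iff_getElem, get_eq_getElem, decide_eq_true_eq,
    Bool.not_eq_true', decide_eq_false_iff_not]
  constructor
  · rintro ⟨k, hk, rfl, hP, hmin⟩
    exact ⟨hP, k, hk, rfl, fun j hj => hmin j (hj.trans hk) hj⟩
  · rintro ⟨hP, k, hk, rfl, hmin⟩
    exact ⟨k, hk, rfl, hP, fun j _ hj => hmin j hj⟩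

theorem isFirstSuchThat_map_of_find?_eq_some {f : α → β} {P : β → Prop} {p : α → Bool}
    (hp : ∀ u, p u = true ↔ P (f u)) {l : List α} {a : α} (h : l.find? p = some a) :
    IsFirstSuchThat P (l.map f) (f a) := by
  classical
  have hp' : (fun b => decide (P b)) ∘ f = p := funext fun u =>
    Bool.eq_iff_iff.2 (by rw [Function.comp_apply, decide_eq_true_iff, hp])
  rw [isFirstSuchThat_iff_find?_eq_some, find?_map, hp', h]
  rfl

end List

theorem Function.iterate_factorial_mul_add {α : Type*} [Fintype α] (θ : α → α) {n : ℕ}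
    (hn : Fintype.card α ≤ n) (d : ℕ) : θ^[(Fintype.card α).factorial * d + n] = θ^[n] := by
  funext x
  obtain ⟨a, b, hab, hb, heq⟩ : ∃ a b, a < b ∧ b ≤ Fintype.card α ∧ θ^[a] x = θ^[b] x := by
    obtain ⟨i, j, hij, heq⟩ := Fintype.exists_ne_map_eq_of_card_lt
      (fun i : Fin (Fintype.card α + 1) => θ^[i] x) (by simp)
    rcases lt_or_gt_of_ne (Fin.val_ne_of_ne hij) with h | h
    · exact ⟨i, j, h, Nat.lt_succ_iff.1 j.isLt, heq⟩
    · exact ⟨j, i, h, Nat.lt_succ_iff.1 i.isLt, heq.symm⟩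
  have hper : IsPeriodicPt θ (b - a) (θ^[a] x) := by
    rw [IsPeriodicPt, IsFixedPt, ← iterate_add_apply, Nat.sub_add_cancel hab.le, heq]
  obtain ⟨t, ht⟩ := (Nat.dvd_factorial (by omega) (by omega) : b - a ∣ (Fintype.card α).factorial)
  have hx : θ^[n] x = θ^[n - a] (θ^[a] x) := by
    rw [← iterate_add_apply, Nat.sub_add_cancel (by omega)]
  rw [iterate_add_apply, ht, mul_assoc, hx]
  exact (hper.apply_iterate _).mul_const _

namespace Substitution

variable {ι : Type*}

def iter (σ : ι → List ι) : ℕ → ι → List ι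
  | 0, x => [x]
  | j + 1, x => (iter σ j x).flatMap σ

def support (σ : ι → List ι) (x : ι) : Set ι :=
  {y | ∃ j, y ∈ iter σ j x}

def ImageContainsSupport (σ : ι → List ι) : Prop :=
  ∀ x, ∀ y ∈ support σ x, y ∈ σ x

variable {σ : ι → List ι}

theorem iter_succ (σ : ι → List ι) (j : ℕ) (x : ι) :
    iter σ (j + 1) x = (iter σ j x).flatMap σ := rfl

@[simp]
theorem iter_one (σ : ι → List ι) (x : ι) : iter σ 1 x = σ x := List.flatMap_singleton σ x

theorem iter_add (σ : ι → List ι) (i j : ℕ) (x : ι) :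
    iter σ (i + j) x = (iter σ j x).flatMap (iter σ i) := by
  induction i with
  | zero => rw [Nat.zero_add]; exact (List.flatMap_singleton' _).symm
  | succ i ih => rw [Nat.add_right_comm, iter_succ, ih, List.flatMap_assoc]; rfl

theorem iter_iter (σ : ι → List ι) (n j : ℕ) (x : ι) :
    iter (iter σ n) j x = iter σ (n * j) x := by
  induction j with
  | zero => rfl
  | succ j ih => rw [iter_succ, ih, Nat.mul_succ, Nat.add_comm, iter_add]

theorem iter_reverse (σ : ι → List ι) (j : ℕ) (x : ι) :
    iter (fun a => (σ a).reverse) j x = (iter σ j x).reverse := by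
  induction j with
  | zero => rfl
  | succ j ih => rw [iter_succ, iter_succ, ih, List.reverse_flatMap]; rfl

theorem mem_iter_add {x y z : ι} {i j : ℕ} (hy : y ∈ iter σ j x) (hz : z ∈ iter σ i y) :
    z ∈ iter σ (i + j) x := by
  rw [iter_add]
  exact List.mem_flatMap.2 ⟨y, hy, hz⟩

theorem mem_iter_of_le (hσ : ∀ a, a ∈ σ a) {x y : ι} {i j : ℕ} (hij : i ≤ j)
    (hy : y ∈ iter σ i x) : y ∈ iter σ j x := by
  induction j, hij using Nat.le_induction with
  | base => exact hy
  | succ j _ ih => exact List.mem_flatMap.2 ⟨y, ih, hσ y⟩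

theorem self_mem_support (σ : ι → List ι) (x : ι) : x ∈ support σ x :=
  ⟨0, List.mem_singleton_self x⟩

theorem mem_support_of_mem {x y : ι} (hy : y ∈ σ x) : y ∈ support σ x :=
  ⟨1, by rwa [iter_one]⟩

theorem support_subset_of_mem {x y : ι} (hy : y ∈ support σ x) : support σ y ⊆ support σ x := by
  rintro z ⟨i, hz⟩
  obtain ⟨j, hy⟩ := hy
  exact ⟨i + j, mem_iter_add hy hz⟩

theorem support_iter_subset (n : ℕ) (x : ι) : support (iter σ n) x ⊆ support σ x := by
  rintro y ⟨j, hy⟩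
  exact ⟨n * j, by rwa [← iter_iter]⟩

theorem support_reverse (σ : ι → List ι) (x : ι) :
    support (fun a => (σ a).reverse) x = support σ x := by
  simp [support, iter_reverse]

theorem exists_imageContainsSupport_iter [Finite ι] (hσ : ∀ a, a ∈ σ a) :
    ∃ n, 1 ≤ n ∧ ImageContainsSupport (iter σ n) := by
  have : ∀ᶠ n in Filter.atTop, ∀ x, ∀ y ∈ support σ x, y ∈ iter σ n x := by
    refine Filter.eventually_all.2 fun x => Filter.eventually_all.2 fun y => ?_
    by_cases hy : y ∈ support σ x
    · obtain ⟨j, hj⟩ := hy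
      filter_upwards [Filter.eventually_ge_atTop j] with n hn _
      exact mem_iter_of_le hσ hn hj
    · exact Filter.Eventually.of_forall fun _ hy' => absurd hy' hy
  obtain ⟨n, hn, hn1⟩ := (this.and (Filter.eventually_ge_atTop 1)).exists
  exact ⟨n, hn1, fun x y hy => hn x y (support_iter_subset n x hy)⟩

theorem le_count_iter_self [DecidableEq ι] (hσ : ∀ a, a ∈ σ a) {x y : ι} (hne : x ≠ y)
    (hyx : y ∈ σ x) (hxy : x ∈ σ y) {n : ℕ} (hn : 1 ≤ n) : n ≤ (iter σ n x).count x := by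
  suffices n ≤ (iter σ n x).count x ∧ 1 ≤ (iter σ n x).count y from this.1
  induction n, hn using Nat.le_induction with
  | base => simpa using ⟨hσ x, hyx⟩
  | succ n _ ih =>
    have hx := List.count_add_count_le_count_flatMap hne (hσ x) hxy (iter σ n x)
    have hy := List.count_add_count_le_count_flatMap hne hyx (hσ y) (iter σ n x)
    rw [← iter_succ] at hx hy
    omega

variable {p p₁ : ι → Bool}

def firstLetter (σ : ι → List ι) (p₁ : ι → Bool) (w : ι) : ι :=
  ((σ w).find? p₁).getD w

theorem find?_eq_some_firstLetter (hp₁ : ∀ w, p₁ w = (σ w).any p₁) {w : ι} (hw : p₁ w) :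
    (σ w).find? p₁ = some (firstLetter σ p₁ w) := by
  obtain ⟨a, ha⟩ := Option.isSome_iff_exists.1
    (List.find?_isSome.2 (List.any_eq_true.1 (hp₁ w ▸ hw)))
  simp [firstLetter, ha]

theorem find?_iter_eq_some (hp₁ : ∀ w, p₁ w = (σ w).any p₁) {w : ι} (hw : p₁ w) (j : ℕ) :
    (iter σ j w).find? p₁ = some ((firstLetter σ p₁)^[j] w) ∧ p₁ ((firstLetter σ p₁)^[j] w) := by
  induction j with
  | zero => exact ⟨List.find?_cons_of_pos hw, hw⟩
  | succ j ih =>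
    have hfind := find?_eq_some_firstLetter hp₁ ih.2
    rw [iter_succ, List.find?_flatMap_eq_bind, funext fun a => (hp₁ a).symm, ih.1,
      Option.bind_some, Function.iterate_succ_apply', hfind]
    exact ⟨rfl, List.find?_some hfind⟩

theorem find?_iter_succ (hp₁ : ∀ w, p₁ w = (σ w).any p₁) (hp : ∀ w, p₁ w = (σ w).any p)
    {w : ι} (hw : p₁ w) (j : ℕ) :
    (iter σ (j + 1) w).find? p = (σ ((firstLetter σ p₁)^[j] w)).find? p := by
  rw [iter_succ, List.find?_flatMap_eq_bind, funext fun a => (hp a).symm,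
    (find?_iter_eq_some hp₁ hw j).1, Option.bind_some]

theorem exists_find?_iter_mul_eq_some [Fintype ι] (hp₁ : ∀ w, p₁ w = (σ w).any p₁)
    (hp : ∀ w, p₁ w = (σ w).any p) {N : ℕ} (hN : Fintype.card ι < N)
    (hdvd : (Fintype.card ι).factorial ∣ N) {x : ι} (hx : p₁ x) :
    ∃ a, ∀ j, 1 ≤ j → (iter σ (N * j) x).find? p = some a := by
  set θ := firstLetter σ p₁
  have hsome : ((σ (θ^[N - 1] x)).find? p).isSome :=
    List.find?_isSome.2 (List.any_eq_true.1 (hp _ ▸ (find?_iter_eq_some hp₁ hx _).2))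
  obtain ⟨a, ha⟩ := Option.isSome_iff_exists.1 hsome
  refine ⟨a, fun j hj => ?_⟩
  obtain ⟨c, hc⟩ := hdvd
  obtain ⟨j, rfl⟩ := Nat.exists_eq_add_of_le' hj
  have hsplit : N * (j + 1) = ((Fintype.card ι).factorial * (c * j) + (N - 1)) + 1 := by
    rw [← mul_assoc, ← hc, Nat.mul_succ]
    omega
  rw [hsplit, find?_iter_succ hp₁ hp hx, Function.iterate_factorial_mul_add θ (by omega), ha]

namespace ImageContainsSupport

theorem mem_self (hσ : ImageContainsSupport σ) (x : ι) : x ∈ σ x :=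
  hσ x x (self_mem_support σ x)

theorem reverse (hσ : ImageContainsSupport σ) :
    ImageContainsSupport fun a => (σ a).reverse := by
  intro x y hy
  rw [support_reverse] at hy
  exact List.mem_reverse.2 (hσ x y hy)

theorem mem_iter (hσ : ImageContainsSupport σ) {N : ℕ} (hN : 1 ≤ N) {x y : ι}
    (hy : y ∈ support σ x) : y ∈ iter σ N x :=
  mem_iter_of_le hσ.mem_self hN (by rw [iter_one]; exact hσ x y hy)

theorem setOf_mem_iter_mul (hσ : ImageContainsSupport σ) {N : ℕ} (hN : 1 ≤ N) (x : ι) :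
    {y | ∃ j, y ∈ iter σ (N * j) x} = support σ x := by
  ext y
  refine ⟨fun ⟨j, hj⟩ => ⟨N * j, hj⟩, fun hy => ⟨1, ?_⟩⟩
  rw [mul_one]
  exact hσ.mem_iter hN hy

theorem three_le_count_iter [DecidableEq ι] (hσ : ImageContainsSupport σ) {N : ℕ} (hN : 3 ≤ N)
    {x y : ι} (hne : y ≠ x) (hy : y ∈ support σ x) (hyx : support σ y = support σ x) :
    3 ≤ (iter σ N x).count x := by
  have hxy : x ∈ σ y := hσ y x (hyx ▸ self_mem_support σ x)
  exact hN.trans (le_count_iter_self hσ.mem_self hne.symm (hσ x y hy) hxy (by omega))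

open Classical in
theorem exists_find?_stratum [Fintype ι] (hσ : ImageContainsSupport σ) {N : ℕ}
    (hN : Fintype.card ι < N) (hdvd : (Fintype.card ι).factorial ∣ N) {x z : ι}
    (hz : z ∈ support σ x) :
    ∃ a, ∀ j, 1 ≤ j → (iter σ (N * j) x).find?
      (fun u => decide (u ∈ support σ z ∧ support σ u = support σ z)) = some a := by
  refine exists_find?_iter_mul_eq_some (p₁ := fun w => decide (z ∈ support σ w))
    (fun w => ?_) (fun w => ?_) hN hdvd (decide_eq_true hz)
  · rw [Bool.eq_iff_iff]
    simp only [decide_eq_true_eq, List.any_eq_true]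
    exact ⟨fun hw => ⟨z, hσ w z hw, self_mem_support σ z⟩,
      fun ⟨u, hu, hzu⟩ => support_subset_of_mem (mem_support_of_mem hu) hzu⟩
  · rw [Bool.eq_iff_iff]
    simp only [decide_eq_true_eq, List.any_eq_true]
    exact ⟨fun hw => ⟨z, hσ w z hw, self_mem_support σ z, rfl⟩,
      fun ⟨u, hu, _, hzu⟩ => support_subset_of_mem (mem_support_of_mem hu)
        (hzu ▸ self_mem_support σ z)⟩

theorem exists_isFirstSuchThat_stratum [Fintype ι] (hσ : ImageContainsSupport σ) {N : ℕ}
    (hN : Fintype.card ι < N) (hdvd : (Fintype.card ι).factorial ∣ N) {x z : ι}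
    (hz : z ∈ support σ x) {j : ℕ} (hj : 1 ≤ j) :
    ∃ p, IsFirstSuchThat (fun q => q.1 ∈ support σ z ∧ support σ q.1 = support σ z)
        ((iter σ (N * j) x).map (·, true)) p ∧
      IsFirstSuchThat (fun q => q.1 ∈ support σ z ∧ support σ q.1 = support σ z)
        ((iter σ N x).map (·, true)) p := by
  classical
  obtain ⟨a, ha⟩ := hσ.exists_find?_stratum hN hdvd hz
  have hp : ∀ u, decide (u ∈ support σ z ∧ support σ u = support σ z) = true ↔
      (u ∈ support σ z ∧ support σ u = support σ z) := fun u => decide_eq_true_iff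
  exact ⟨(a, true), List.isFirstSuchThat_map_of_find?_eq_some hp (ha j hj),
    List.isFirstSuchThat_map_of_find?_eq_some hp (mul_one N ▸ ha 1 le_rfl)⟩

theorem exists_head?_eq_some [Fintype ι] (hσ : ImageContainsSupport σ) {N : ℕ}
    (hN : Fintype.card ι < N) (hdvd : (Fintype.card ι).factorial ∣ N) (x : ι) :
    ∃ a, ∀ j, 1 ≤ j → (iter σ (N * j) x).head? = some a := by
  have hp : ∀ w, true = (σ w).any fun _ => true := fun w =>
    (List.any_eq_true.2 ⟨w, hσ.mem_self w, rfl⟩).symm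
  obtain ⟨a, ha⟩ := exists_find?_iter_mul_eq_some hp hp hN hdvd (x := x) rfl
  refine ⟨a, fun j hj => ?_⟩
  rw [← ha j hj]
  cases iter σ (N * j) x <;> rfl

end ImageContainsSupport

end Substitution

namespace FreeGroup

open Substitution

variable {ι : Type*}

def exponentSum [DecidableEq ι] : FreeGroup ι →* Multiplicative (ι → ℤ) :=
  FreeGroup.lift fun i => .ofAdd (Pi.single i 1)

def exponentSumMatrix [DecidableEq ι] (f : FreeGroup ι →* FreeGroup ι) : Matrix ι ι ℤ :=
  .of fun y x => (exponentSum (f (of x))).toAdd y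

def positiveWord (l : List ι) : FreeGroup ι :=
  mk (l.map (·, true))

theorem toAdd_exponentSum_of [DecidableEq ι] (i : ι) :
    (exponentSum (of i)).toAdd = Pi.single i 1 := by
  simp [exponentSum]

theorem toAdd_exponentSum_apply [DecidableEq ι] [Fintype ι] (f : FreeGroup ι →* FreeGroup ι)
    (w : FreeGroup ι) :
    (exponentSum (f w)).toAdd = (exponentSumMatrix f).mulVec (exponentSum w).toAdd := by
  induction w using FreeGroup.induction_on with
  | C1 => simp
  | of x =>
    rw [toAdd_exponentSum_of, Matrix.mulVec_single]
    ext y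
    simp [exponentSumMatrix]
  | inv_of x ih => simp only [_root_.map_inv, toAdd_inv, Matrix.mulVec_neg, ih]
  | mul x y ihx ihy => simp only [_root_.map_mul, toAdd_mul, Matrix.mulVec_add, ihx, ihy]

theorem exponentSumMatrix_comp [DecidableEq ι] [Fintype ι] (f g : FreeGroup ι →* FreeGroup ι) :
    exponentSumMatrix (f.comp g) = exponentSumMatrix f * exponentSumMatrix g := by
  ext y x
  change (exponentSum (f (g (of x)))).toAdd y = _
  rw [toAdd_exponentSum_apply, Matrix.mul_apply]
  rfl

theorem exponentSumMatrix_id [DecidableEq ι] [Fintype ι] :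
    exponentSumMatrix (MonoidHom.id (FreeGroup ι)) = 1 := by
  ext y x
  simp [exponentSumMatrix, toAdd_exponentSum_of, Matrix.one_apply, Pi.single_apply]

theorem det_exponentSumMatrix_ne_zero [DecidableEq ι] [Fintype ι] (φ : MulAut (FreeGroup ι)) :
    (exponentSumMatrix φ.toMonoidHom).det ≠ 0 := by
  refine Matrix.det_ne_zero_of_right_inverse (B := exponentSumMatrix φ.symm.toMonoidHom) ?_
  rw [← exponentSumMatrix_comp, ← exponentSumMatrix_id]
  congr 1
  ext x
  simp

theorem toWord_positiveWord [DecidableEq ι] (l : List ι) :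
    (positiveWord l).toWord = l.map (·, true) := by
  rw [positiveWord, toWord_mk, isReduced_iff_reduce_eq.1]
  rw [IsReduced, List.isChain_map]
  exact List.isChain_iff_getElem.2 fun _ _ _ => rfl

theorem positiveWord_append (l₁ l₂ : List ι) :
    positiveWord (l₁ ++ l₂) = positiveWord l₁ * positiveWord l₂ := by
  rw [positiveWord, positiveWord, positiveWord, mul_mk, List.map_append]

theorem toAdd_exponentSum_positiveWord [DecidableEq ι] (l : List ι) :
    (exponentSum (positiveWord l)).toAdd = fun y => (l.count y : ℤ) := by
  induction l with
  | nil => ext; exact congrFun (congrArg _ (_root_.map_one exponentSum)) _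
  | cons a l ih =>
    rw [← List.singleton_append, positiveWord_append, _root_.map_mul, toAdd_mul, ih]
    ext y
    have h1 : positiveWord [a] = of a := rfl
    simp [h1, toAdd_exponentSum_of, Pi.single_apply, List.count_cons, eq_comm (a := y), add_comm]

variable [DecidableEq ι]

def letterImage (φ : MulAut (FreeGroup ι)) (x : ι) : List ι :=
  (φ (of x)).toWord.map Prod.fst

variable {φ : MulAut (FreeGroup ι)}

theorem apply_of_eq_positiveWord (hpos : ∀ i, ∀ p ∈ (φ (of i)).toWord, p.2 = true) (x : ι) :
    φ (of x) = positiveWord (letterImage φ x) := by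
  conv_lhs => rw [← mk_toWord (x := φ (of x))]
  rw [positiveWord, letterImage, List.map_map]
  congr 1
  conv_lhs => rw [← List.map_id (φ (of x)).toWord]
  exact List.map_congr_left fun p hp => Prod.ext rfl (hpos x p hp)

theorem apply_positiveWord (hpos : ∀ i, ∀ p ∈ (φ (of i)).toWord, p.2 = true) (l : List ι) :
    φ (positiveWord l) = positiveWord (l.flatMap (letterImage φ)) := by
  induction l with
  | nil => exact _root_.map_one φ
  | cons a l ih =>
    rw [← List.singleton_append, positiveWord_append, _root_.map_mul, ih, List.flatMap_append,
      List.flatMap_singleton, positiveWord_append, ← apply_of_eq_positiveWord hpos]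
    rfl

theorem pow_apply_of_eq_positiveWord (hpos : ∀ i, ∀ p ∈ (φ (of i)).toWord, p.2 = true)
    (j : ℕ) (x : ι) : (φ ^ j) (of x) = positiveWord (iter (letterImage φ) j x) := by
  induction j with
  | zero => rfl
  | succ j ih => rw [pow_succ', MulAut.mul_apply, ih, apply_positiveWord hpos, iter_succ]

theorem exists_perm_forall_mem_letterImage [Fintype ι]
    (hpos : ∀ i, ∀ p ∈ (φ (of i)).toWord, p.2 = true) :
    ∃ π : Equiv.Perm ι, ∀ x, π x ∈ letterImage φ x := by
  have hdet := det_exponentSumMatrix_ne_zero φ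
  rw [Matrix.det_apply] at hdet
  obtain ⟨π, -, hπ⟩ := Finset.exists_ne_zero_of_sum_ne_zero hdet
  have hprod : ∏ x, exponentSumMatrix φ.toMonoidHom (π x) x ≠ 0 := fun h =>
    hπ (by rw [h, smul_zero])
  refine ⟨π, fun x => ?_⟩
  have hx := Finset.prod_ne_zero_iff.1 hprod x (Finset.mem_univ x)
  rw [exponentSumMatrix, Matrix.of_apply, MulEquiv.coe_toMonoidHom, apply_of_eq_positiveWord hpos,
    toAdd_exponentSum_positiveWord, Nat.cast_ne_zero] at hx
  exact List.count_pos_iff.1 (Nat.pos_of_ne_zero hx)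

theorem exists_iter_forall_mem_self [Fintype ι]
    (hpos : ∀ i, ∀ p ∈ (φ (of i)).toWord, p.2 = true) :
    ∃ K, 1 ≤ K ∧ ∀ x, x ∈ iter (letterImage φ) K x := by
  obtain ⟨π, hπ⟩ := exists_perm_forall_mem_letterImage hpos
  have hiter : ∀ j x, (π ^ j) x ∈ iter (letterImage φ) j x := by
    intro j x
    induction j with
    | zero => exact List.mem_singleton_self x
    | succ j ih => rw [pow_succ', Equiv.Perm.mul_apply]; exact List.mem_flatMap.2 ⟨_, ih, hπ _⟩
  refine ⟨orderOf π, orderOf_pos π, fun x => ?_⟩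
  simpa [pow_orderOf_eq_one] using hiter (orderOf π) x

end FreeGroup

open FreeGroup Substitution

section Translation

variable {m : ℕ} {ψ : MulAut (FreeGroup (Fin m))} {σ : Fin m → List (Fin m)} {N : ℕ}

theorem appears_iff_of_toWord_eq
    (hψ : ∀ j x, ((ψ ^ j) (of x)).toWord = (iter σ (N * j) x).map (·, true))
    {j : ℕ} {x y : Fin m} :
    Appears m ψ j y x ↔ y ∈ iter σ (N * j) x := by
  simp [Appears, hψ]

theorem supp_eq_support_of_toWord_eq (hσ : ImageContainsSupport σ) (hN : 1 ≤ N)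
    (hψ : ∀ j x, ((ψ ^ j) (of x)).toWord = (iter σ (N * j) x).map (·, true)) (x : Fin m) :
    supp m ψ x = support σ x := by
  simp only [supp, appears_iff_of_toWord_eq hψ]
  exact hσ.setOf_mem_iter_mul hN x

theorem stratum_eq_of_toWord_eq (hσ : ImageContainsSupport σ) (hN : 1 ≤ N)
    (hψ : ∀ j x, ((ψ ^ j) (of x)).toWord = (iter σ (N * j) x).map (·, true)) (z : Fin m) :
    stratum m ψ z = {u | u ∈ support σ z ∧ support σ u = support σ z} := by
  ext u
  simp [stratum, supp_eq_support_of_toWord_eq hσ hN hψ]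

theorem conditioned_of_toWord_eq (hσ : ImageContainsSupport σ) (h3 : 3 ≤ N) (hN : m < N)
    (hdvd : m.factorial ∣ N)
    (hψ : ∀ j x, ((ψ ^ j) (of x)).toWord = (iter σ (N * j) x).map (·, true)) :
    Conditioned m ψ := by
  have hψ1 : ∀ x, (ψ (of x)).toWord = (iter σ N x).map (·, true) := fun x => by
    simpa using hψ 1 x
  have hsupp := supp_eq_support_of_toWord_eq hσ (by omega) hψ
  refine ⟨fun x => ?_, fun x ⟨y, hy, hne⟩ => ?_, fun x y hy => ?_, fun x j hj => ?_,
    fun x j hj z hz => ?_⟩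
  · rw [appears_iff_of_toWord_eq hψ, mul_one]
    exact hσ.mem_iter (by omega) (self_mem_support σ x)
  · rw [stratum_eq_of_toWord_eq hσ (by omega) hψ] at hy
    rw [hψ1, List.count_map_of_injective _ _ (Prod.mk_left_injective true)]
    exact hσ.three_le_count_iter h3 hne hy.1 hy.2
  · rw [appears_iff_of_toWord_eq hψ, mul_one]
    exact hσ.mem_iter (by omega) (hsupp x ▸ hy)
  all_goals
    rw [← Fintype.card_fin m] at hN hdvd
    simp only [IsLastSuchThat, List.getLast?_eq_head?_reverse, hψ, hψ1, ← List.map_reverse,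
      ← iter_reverse]
  · obtain ⟨a, ha⟩ := hσ.exists_head?_eq_some hN hdvd x
    obtain ⟨b, hb⟩ := hσ.reverse.exists_head?_eq_some hN hdvd x
    simp only [List.head?_map, ha j hj, hb j hj]
    rw [← mul_one N, ha 1 le_rfl, hb 1 le_rfl]
    exact ⟨rfl, rfl⟩
  · rw [hsupp] at hz
    simp only [stratum_eq_of_toWord_eq hσ (by omega) hψ, Set.mem_ofPred_eq]
    refine ⟨hσ.exists_isFirstSuchThat_stratum hN hdvd hz hj, ?_⟩
    simpa only [support_reverse] using
      hσ.reverse.exists_isFirstSuchThat_stratum hN hdvd (by rwa [support_reverse]) hj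

end Translation

theorem conditioning_proposition (m : ℕ) (φ : MulAut (FreeGroup (Fin m)))
    (hpos : IsPositiveAut m φ) :
    ∃ k : ℕ, 1 ≤ k ∧ Conditioned m (φ ^ k) := by
  obtain ⟨K, hK, hrefl⟩ := exists_iter_forall_mem_self hpos
  obtain ⟨L, hL, hσ⟩ := exists_imageContainsSupport_iter hrefl
  have hfact : 0 < (m + 1).factorial := Nat.factorial_pos _
  refine ⟨K * L * (3 * (m + 1).factorial), Nat.mul_pos (Nat.mul_pos hK hL) (by positivity),
    conditioned_of_toWord_eq hσ (N := 3 * (m + 1).factorial) (by omega) ?_ ?_ fun j x => ?_⟩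
  · have : m + 1 ≤ (m + 1).factorial := Nat.self_le_factorial _
    omega
  · exact (Nat.factorial_dvd_factorial m.le_succ).mul_left 3
  · rw [← pow_mul, pow_apply_of_eq_positiveWord hpos, toWord_positiveWord, iter_iter, iter_iter]
    congr 2
    ring
end

section
/- Left-order property for positive automorphisms: Let φ be a positive automorphism of the free group F with basis a_1, …, a_m, and suppose that for every basis letter x, if the positive word φ^j(x) begins with the letter x for some j ≥ 1, then φ(x) begins with x. Then for any basis letters x_1, …, x_r (with x_{r+1} := x_1) and any positive integers j_1, …, j_r such that φ^{j_k}(x_k) begins with x_{k+1} for each k = 1, …, r, one has x_1 = x_2 = ⋯ = x_r. Consequently, the relation defined on basis letters by 'y ⪯_L x if and only if y = x or φ^j(x) begins with y for some j ≥ 1' is a partial order. -/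
/-- The (positive) word `w` begins with the basis letter `y`. -/
def BeginsWith (m : ℕ) (w : FreeGroup (Fin m)) (y : Fin m) : Prop :=
  ∃ b : Bool, w.toWord.head? = some (y, b)

/-!
Since a product of positive words involves no cancellation, the first letter of `φ^j(x)` is
`f^[j] x`, where `f` sends a letter `a` to the first letter of `φ(a)`. The hypothesis says that
every periodic point of `f` is fixed. Going once around a cycle `x₁ → ⋯ → x_r → x₁` shows that
`x₁` is a periodic point, hence fixed, so every `x_k`, being an iterate of `x₁`, equals `x₁`.
Likewise `⪯_L` is reachability under `f`, which is antisymmetric because two letters reachable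
from each other are periodic, hence fixed, hence equal.
-/

open Function

namespace FreeGroup

variable {α β : Type*}

theorem isReduced_of_forall_snd_eq_true {L : List (α × Bool)} (hL : ∀ p ∈ L, p.2 = true) :
    IsReduced L :=
  List.Pairwise.isChain <| List.pairwise_of_forall_mem_list fun a ha b hb _ => by
    rw [hL a ha, hL b hb]

variable [DecidableEq α] [DecidableEq β]

def IsPositive (w : FreeGroup α) : Prop := ∀ p ∈ w.toWord, p.2 = true

theorem isPositive_mk {L : List (α × Bool)} (hL : ∀ p ∈ L, p.2 = true) : IsPositive (mk L) := by
  rwa [IsPositive, toWord_mk, (isReduced_of_forall_snd_eq_true hL).reduce_eq]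

theorem isPositive_one : IsPositive (1 : FreeGroup α) := by
  simp [IsPositive, toWord_one]

theorem isPositive_of (a : α) : IsPositive (of a) := by
  simp [IsPositive, toWord_of]

namespace IsPositive

variable {u v w : FreeGroup α}

theorem toWord_mul (hu : IsPositive u) (hv : IsPositive v) :
    (u * v).toWord = u.toWord ++ v.toWord := by
  rw [FreeGroup.toWord_mul, IsReduced.reduce_eq]
  exact isReduced_of_forall_snd_eq_true fun p hp => (List.mem_append.1 hp).elim (hu p) (hv p)

theorem mul (hu : IsPositive u) (hv : IsPositive v) : IsPositive (u * v) := by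
  intro p hp
  rw [hu.toWord_mul hv] at hp
  exact (List.mem_append.1 hp).elim (hu p) (hv p)

theorem head?_mul (hu : IsPositive u) (hv : IsPositive v) (hu₁ : u ≠ 1) :
    (u * v).toWord.head? = u.toWord.head? := by
  rw [hu.toWord_mul hv, List.head?_append_of_ne_nil _ (mt toWord_eq_nil_iff.1 hu₁)]

theorem exists_eq_of_mul_of_head?_eq (hw : IsPositive w) {y : α} {b : Bool}
    (hy : w.toWord.head? = some (y, b)) : ∃ v, IsPositive v ∧ w = of y * v := by
  obtain ⟨L, hL⟩ : ∃ L, w.toWord = (y, b) :: L := List.head?_eq_some_iff.1 hy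
  have hb : b = true := hw _ (hL ▸ List.mem_cons_self)
  refine ⟨mk L, isPositive_mk fun p hp => hw p (hL ▸ List.mem_cons_of_mem _ hp), ?_⟩
  rw [← mk_toWord (x := w), hL, hb, of, mul_mk, List.singleton_append]

theorem map {F : Type*} [FunLike F (FreeGroup α) (FreeGroup β)] [MonoidHomClass F _ _] {φ : F}
    (hφ : ∀ a, IsPositive (φ (of a))) (hw : IsPositive w) : IsPositive (φ w) := by
  suffices ∀ L : List (α × Bool), (∀ p ∈ L, p.2 = true) → IsPositive (φ (mk L)) by
    simpa only [mk_toWord] using this w.toWord hw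
  intro L hL
  induction L with
  | nil => simpa only [← one_eq_mk, _root_.map_one] using isPositive_one (α := β)
  | cons p L ih =>
    obtain ⟨a, b⟩ := p
    obtain rfl : b = true := hL _ List.mem_cons_self
    rw [← List.singleton_append, ← mul_mk, ← of, _root_.map_mul]
    exact (hφ a).mul (ih fun p hp => hL p (List.mem_cons_of_mem _ hp))

end IsPositive

section FirstLetter

variable (φ : MulAut (FreeGroup α))

theorem toWord_apply_of_ne_nil (a : α) : (φ (of a)).toWord ≠ [] := fun h =>
  of_ne_one a (φ.injective (by rw [toWord_eq_nil_iff.1 h, _root_.map_one]))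

def firstLetter (a : α) : α :=
  ((φ (of a)).toWord.head (toWord_apply_of_ne_nil φ a)).1

variable {φ} (hφ : ∀ a, IsPositive (φ (of a)))
include hφ

theorem head?_toWord_apply_of (a : α) :
    (φ (of a)).toWord.head? = some (firstLetter φ a, true) := by
  have hne := toWord_apply_of_ne_nil φ a
  rw [List.head?_eq_some_head hne, firstLetter, ← hφ a _ (List.head_mem hne)]

theorem head?_toWord_apply {w : FreeGroup α} (hw : IsPositive w) {y : α} {b : Bool}
    (hy : w.toWord.head? = some (y, b)) :
    (φ w).toWord.head? = some (firstLetter φ y, true) := by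
  obtain ⟨v, hv, rfl⟩ := hw.exists_eq_of_mul_of_head?_eq hy
  have hφy : φ (of y) ≠ 1 := (map_ne_one_iff φ φ.injective).2 (of_ne_one y)
  rw [_root_.map_mul, (hφ y).head?_mul (hv.map hφ) hφy, head?_toWord_apply_of hφ]

theorem isPositive_pow_apply_of (a : α) (j : ℕ) : IsPositive ((φ ^ j) (of a)) := by
  induction j with
  | zero => exact isPositive_of a
  | succ j ih => rw [pow_succ', MulAut.mul_apply]; exact ih.map hφ

theorem head?_toWord_pow_apply_of (a : α) (j : ℕ) :
    ((φ ^ j) (of a)).toWord.head? = some ((firstLetter φ)^[j] a, true) := by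
  induction j with
  | zero => rw [pow_zero, MulAut.one_apply, toWord_of]; rfl
  | succ j ih =>
    rw [pow_succ', MulAut.mul_apply, head?_toWord_apply hφ (isPositive_pow_apply_of hφ a j) ih,
      iterate_succ_apply']

end FirstLetter

end FreeGroup

open FreeGroup in
theorem beginsWith_pow_apply_of_iff {m : ℕ} {φ : MulAut (FreeGroup (Fin m))}
    (hpos : IsPositiveAut m φ) (x y : Fin m) (j : ℕ) :
    BeginsWith m ((φ ^ j) (of x)) y ↔ (firstLetter φ)^[j] x = y := by
  simp [BeginsWith, head?_toWord_pow_apply_of hpos, eq_comm]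

namespace Function

variable {α : Type*} {f : α → α}

theorem iterate_eq_self_of_isPeriodicPt_of_le (hf : periodicPts f ⊆ fixedPoints f) {x : α}
    {n k : ℕ} (hx : IsPeriodicPt f n x) (hk : k ≤ n) : f^[k] x = x := by
  rcases n.eq_zero_or_pos with rfl | hn
  · rw [Nat.le_zero.1 hk, iterate_zero_apply]
  · exact iterate_fixed (hf (mk_mem_periodicPts hn hx)) k

theorem eq_of_iterate_eq_of_iterate_eq (hf : periodicPts f ⊆ fixedPoints f) {x y : α}
    {n₁ n₂ : ℕ} (h₁ : f^[n₁] x = y) (h₂ : f^[n₂] y = x) : y = x := by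
  have hx : IsPeriodicPt f (n₂ + n₁) x := by
    rw [IsPeriodicPt, IsFixedPt, iterate_add_apply, h₁, h₂]
  rw [← h₁, iterate_eq_self_of_isPeriodicPt_of_le hf hx (Nat.le_add_left _ _)]

theorem isPartialOrder_exists_iterate_eq (hf : periodicPts f ⊆ fixedPoints f) :
    IsPartialOrder α (fun y x => ∃ n, f^[n] x = y) where
  refl _ := ⟨0, rfl⟩
  trans _ _ _ := fun ⟨n₁, h₁⟩ ⟨n₂, h₂⟩ => ⟨n₁ + n₂, by rw [iterate_add_apply, h₂, h₁]⟩
  antisymm _ _ := fun ⟨_, h₁⟩ ⟨_, h₂⟩ => eq_of_iterate_eq_of_iterate_eq hf h₁ h₂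

theorem exists_iterate_eq_iff_eq_or_exists_pos {x y : α} :
    (∃ n, f^[n] x = y) ↔ y = x ∨ ∃ n, 1 ≤ n ∧ f^[n] x = y := by
  refine ⟨fun ⟨n, hn⟩ => ?_, ?_⟩
  · rcases n.eq_zero_or_pos with rfl | hpos
    · exact Or.inl hn.symm
    · exact Or.inr ⟨n, hpos, hn⟩
  · rintro (rfl | ⟨n, -, hn⟩)
    exacts [⟨0, rfl⟩, ⟨n, hn⟩]

theorem iterate_sum_range_of_cycle {r : ℕ} {x : ℕ → α} {j : ℕ → ℕ}
    (hcyc : ∀ k < r, f^[j k] (x k) = x ((k + 1) % r)) {k : ℕ} (hk : k ≤ r) :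
    f^[∑ i ∈ Finset.range k, j i] (x 0) = x (k % r) := by
  induction k with
  | zero => simp
  | succ k ih =>
    rw [Finset.sum_range_succ, add_comm, iterate_add_apply, ih (by omega),
      Nat.mod_eq_of_lt (by omega), hcyc k (by omega)]

theorem eq_of_iterate_cycle (hf : periodicPts f ⊆ fixedPoints f) {r : ℕ} {x : ℕ → α}
    {j : ℕ → ℕ} (hcyc : ∀ k < r, f^[j k] (x k) = x ((k + 1) % r)) {k : ℕ} (hk : k < r) :
    x k = x 0 := by
  have hx₀ : IsPeriodicPt f (∑ i ∈ Finset.range r, j i) (x 0) := by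
    simpa [IsPeriodicPt, IsFixedPt] using iterate_sum_range_of_cycle hcyc le_rfl
  rw [← Nat.mod_eq_of_lt hk, ← iterate_sum_range_of_cycle hcyc hk.le,
    iterate_eq_self_of_isPeriodicPt_of_le hf hx₀
      (Finset.sum_le_sum_of_subset (Finset.range_subset_range.2 hk.le))]

end Function

open FreeGroup in
theorem left_order_property (m : ℕ) (φ : MulAut (FreeGroup (Fin m)))
    (hpos : IsPositiveAut m φ)
    (h : ∀ x : Fin m, ∀ j : ℕ, 1 ≤ j →
      BeginsWith m ((φ ^ j) (FreeGroup.of x)) x → BeginsWith m (φ (FreeGroup.of x)) x) :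
    -- any cycle `φ^{j_k}(x_k)` begins with `x_{k+1}` (indices mod `r`) collapses
    (∀ r : ℕ, 0 < r → ∀ (x : ℕ → Fin m) (j : ℕ → ℕ),
      (∀ k < r, 1 ≤ j k) →
      (∀ k < r, BeginsWith m ((φ ^ j k) (FreeGroup.of (x k))) (x ((k + 1) % r))) →
      ∀ k₁ < r, ∀ k₂ < r, x k₁ = x k₂) ∧
    -- consequently `⪯_L` is a partial order
    IsPartialOrder (Fin m)
      (fun y x => y = x ∨ ∃ j : ℕ, 1 ≤ j ∧ BeginsWith m ((φ ^ j) (FreeGroup.of x)) y) := by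
  have hbegins := beginsWith_pow_apply_of_iff hpos
  have hf : periodicPts (firstLetter φ) ⊆ fixedPoints (firstLetter φ) := by
    rintro x ⟨n, hn, hx⟩
    have hx₁ := h x n hn ((hbegins x x n).2 hx)
    rwa [← pow_one φ, hbegins] at hx₁
  refine ⟨fun r _ x j _ hcyc k₁ hk₁ k₂ hk₂ => ?_, ?_⟩
  · have hcyc' k hk := (hbegins _ _ _).1 (hcyc k hk)
    rw [eq_of_iterate_cycle hf hcyc' hk₁, eq_of_iterate_cycle hf hcyc' hk₂]
  · simp_rw [hbegins, ← exists_iterate_eq_iff_eq_or_exists_pos]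
    exact isPartialOrder_exists_iterate_eq hf
end
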